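/- There is no computable sequence of pairs of strings (xₙ, yₙ) with |xₙ| = |yₙ| such that NID(xₙ, yₙ) < 1/n for every n ≥ 1. -/

import Mathlib

/-!
Describing `k` in unary with `k + 1` bits, every term `g (2 ^ k)` of a computable sequence
of strings has complexity at most `k + O(1)`, i.e. `K (g n) ≤ log₂ n + O(1)` along `n = 2 ^ k`.
On the other hand the numerator of `NID x y` is at least `1`, because the empty program never
halts, so `NID x y < 1 / n` forces `max (K x) (K y) > n`. For large `k` these clash at `n = 2 ^ k`.
-/

/-- A universal prefix machine: a partial computable binary function
(program, condition) ↦ output, whose domain is prefix-free in the program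
argument, which outputs every string from some program, and which is
optimal (universal) among all partial computable prefix machines. -/
structure PrefixUMachine where
  eval : List Bool → List Bool → Part (List Bool)
  partrec : Partrec fun p : List Bool × List Bool => eval p.1 p.2
  prefixFree : ∀ y p q, (eval p y).Dom → (eval q y).Dom → p <+: q → p = q
  total : ∀ x y : List Bool, ∃ p, x ∈ eval p y
  universal : ∀ M : List Bool → List Bool → Part (List Bool),
      Partrec (fun p : List Bool × List Bool => M p.1 p.2) →
      (∀ y p q, (M p y).Dom → (M q y).Dom → p <+: q → p = q) →
      ∃ c, ∀ x y p, x ∈ M p y → ∃ q, x ∈ eval q y ∧ q.length ≤ p.length + c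

namespace PrefixUMachine

/-- Conditional prefix-free Kolmogorov complexity `K(x|y)`. -/
noncomputable def KC (U : PrefixUMachine) (x y : List Bool) : ℕ :=
  sInf {n | ∃ p, p.length = n ∧ x ∈ U.eval p y}

/-- (Unconditional) prefix-free Kolmogorov complexity `K(x)` (empty condition). -/
noncomputable def K (U : PrefixUMachine) (x : List Bool) : ℕ := U.KC x []

/-- The normalized information distance
`NID(x,y) = max{K(x|y),K(y|x)} / max{K(x),K(y)}`. -/
noncomputable def NID (U : PrefixUMachine) (x y : List Bool) : ℚ :=
  (max (U.KC x y) (U.KC y x) : ℚ) / (max (U.K x) (U.K y) : ℚ)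

theorem exists_min (U : PrefixUMachine) (x y : List Bool) :
    ∃ p, x ∈ U.eval p y ∧ p.length = U.KC x y := by
  obtain ⟨p, hp⟩ := U.total x y
  have h : U.KC x y ∈ {n | ∃ p, p.length = n ∧ x ∈ U.eval p y} :=
    Nat.sInf_mem ⟨p.length, p, rfl, hp⟩
  obtain ⟨q, hq1, hq2⟩ := h
  exact ⟨q, hq2, hq1⟩

/-- A canonical shortest program `x*` for `x`. -/
noncomputable def star (U : PrefixUMachine) (x : List Bool) : List Bool :=
  (exists_min U x []).choose

/-- A computable injective pairing of binary strings. -/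
def pairStr (x y : List Bool) : List Bool := (x.flatMap fun b => [true, b]) ++ false :: y

/-- A set of strings is computably enumerable. -/
def CEStr (A : Set (List Bool)) : Prop :=
  ∃ f : List Bool →. Unit, Partrec f ∧ ∀ x, x ∈ A ↔ (f x).Dom

/-- A set of pairs of strings is computably enumerable. -/
def CEPair (A : Set (List Bool × List Bool)) : Prop :=
  ∃ f : List Bool × List Bool →. Unit, Partrec f ∧ ∀ x, x ∈ A ↔ (f x).Dom

end PrefixUMachine

open PrefixUMachine

namespace PrefixUMachine

def unaryCode (k : ℕ) : List Bool := List.replicate k true ++ [false]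

@[simp]
theorem length_unaryCode (k : ℕ) : (unaryCode k).length = k + 1 := by
  simp [unaryCode]

theorem primrec_unaryCode : Primrec unaryCode := by
  have hrep : Primrec fun k : ℕ => (List.range k).map fun _ => true :=
    Primrec.list_map Primrec.list_range (Primrec.const true).to₂
  refine (Primrec.list_append.comp hrep (Primrec.const [false])).of_eq fun k => ?_
  simp [unaryCode, List.map_const']

theorem eq_of_unaryCode_prefix : ∀ {a b : ℕ}, unaryCode a <+: unaryCode b → a = b
  | 0, 0, _ => rfl
  | 0, _ + 1, ⟨_, h⟩ => by simp [unaryCode, List.replicate_succ] at h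
  | _ + 1, 0, h => by simpa using h.length_le
  | _ + 1, _ + 1, h => by
    simp only [unaryCode, List.replicate_succ, List.cons_append, List.cons_prefix_cons] at h
    exact congrArg Nat.succ (eq_of_unaryCode_prefix h.2)

def unaryMachine (f : ℕ → List Bool) (p _ : List Bool) : Part (List Bool) :=
  if p = unaryCode (p.length - 1) then Part.some (f (p.length - 1)) else Part.none

variable {f : ℕ → List Bool}

theorem unaryMachine_partrec (hf : Computable f) :
    Partrec fun q : List Bool × List Bool => unaryMachine f q.1 q.2 := by
  have hlen : Primrec fun p : List Bool => p.length - 1 :=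
    Primrec.nat_sub.comp Primrec.list_length (Primrec.const 1)
  have hcode : Computable fun q : List Bool × List Bool =>
      decide (q.1 = unaryCode (q.1.length - 1)) :=
    (PrimrecRel.decide Primrec.eq).comp Primrec.fst
      (primrec_unaryCode.comp (hlen.comp Primrec.fst)) |>.to_comp
  refine (Partrec.cond hcode (hf.comp (hlen.to_comp.comp Computable.fst)).partrec
    Partrec.none).of_eq fun q => ?_
  by_cases h : q.1 = unaryCode (q.1.length - 1)
  · rw [unaryMachine, if_pos h, decide_eq_true h]
    rfl
  · rw [unaryMachine, if_neg h, decide_eq_false h]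
    rfl

theorem mem_unaryMachine (k : ℕ) (y : List Bool) : f k ∈ unaryMachine f (unaryCode k) y := by
  rw [unaryMachine, length_unaryCode, Nat.add_sub_cancel, if_pos rfl]
  exact Part.mem_some _

theorem eq_unaryCode_of_dom_unaryMachine {p y : List Bool} (h : (unaryMachine f p y).Dom) :
    p = unaryCode (p.length - 1) := by
  by_contra hp
  simp [unaryMachine, hp] at h

theorem unaryMachine_prefixFree (y p q : List Bool) (hp : (unaryMachine f p y).Dom)
    (hq : (unaryMachine f q y).Dom) (hpq : p <+: q) : p = q := by
  rw [eq_unaryCode_of_dom_unaryMachine hp, eq_unaryCode_of_dom_unaryMachine hq] at hpq ⊢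
  rw [eq_of_unaryCode_prefix hpq]

variable (U : PrefixUMachine)

theorem KC_le_of_mem {x y p : List Bool} (h : x ∈ U.eval p y) : U.KC x y ≤ p.length :=
  Nat.sInf_le ⟨p, rfl, h⟩

theorem exists_KC_le_length_add (M : List Bool → List Bool → Part (List Bool))
    (hM : Partrec fun q : List Bool × List Bool => M q.1 q.2)
    (hpf : ∀ y p q, (M p y).Dom → (M q y).Dom → p <+: q → p = q) :
    ∃ c, ∀ x y p, x ∈ M p y → U.KC x y ≤ p.length + c := by
  obtain ⟨c, hc⟩ := U.universal M hM hpf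
  refine ⟨c, fun x y p hx => ?_⟩
  obtain ⟨q, hq, hlen⟩ := hc x y p hx
  exact (U.KC_le_of_mem hq).trans hlen

theorem exists_KC_le_add_of_computable (hf : Computable f) :
    ∃ c, ∀ k y, U.KC (f k) y ≤ k + c := by
  obtain ⟨c, hc⟩ := U.exists_KC_le_length_add (unaryMachine f) (unaryMachine_partrec hf)
    unaryMachine_prefixFree
  refine ⟨c + 1, fun k y => ?_⟩
  have hcode := hc (f k) y (unaryCode k) (mem_unaryMachine k y)
  simp only [length_unaryCode] at hcode
  omega

-- `[]` would be a prefix of both a program for `[true]` and one for `[false]`.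
theorem not_dom_eval_nil (y : List Bool) : ¬ (U.eval [] y).Dom := by
  intro h
  obtain ⟨p, hp⟩ := U.total [true] y
  obtain ⟨q, hq⟩ := U.total [false] y
  rw [← U.prefixFree y [] p h (Part.dom_iff_mem.2 ⟨_, hp⟩) List.nil_prefix] at hp
  rw [← U.prefixFree y [] q h (Part.dom_iff_mem.2 ⟨_, hq⟩) List.nil_prefix] at hq
  simpa using Part.mem_unique hp hq

theorem KC_pos (x y : List Bool) : 0 < U.KC x y := by
  obtain ⟨p, hp, hlen⟩ := U.exists_min x y
  rw [← hlen, List.length_pos_iff]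
  rintro rfl
  exact U.not_dom_eval_nil y (Part.dom_iff_mem.2 ⟨_, hp⟩)

theorem lt_max_K_of_NID_lt {x y : List Bool} {n : ℕ}
    (h : U.NID x y < 1 / (n : ℚ)) : n < max (U.K x) (U.K y) := by
  by_contra! hle
  have hden : (0 : ℚ) < max (U.K x : ℚ) (U.K y) :=
    lt_max_of_lt_left (by exact_mod_cast U.KC_pos x [])
  have hnum : (1 : ℚ) ≤ max (U.KC x y : ℚ) (U.KC y x) :=
    le_max_of_le_left (by exact_mod_cast U.KC_pos x y)
  refine h.not_ge ?_
  calc 1 / (n : ℚ) ≤ 1 / max (U.K x : ℚ) (U.K y) :=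
        one_div_le_one_div_of_le hden (by exact_mod_cast hle)
    _ ≤ U.NID x y := div_le_div_of_nonneg_right hnum hden.le

end PrefixUMachine

/-- There is no computable sequence of pairs `(xₙ, yₙ)` with `|xₙ| = |yₙ|`
such that `NID(xₙ, yₙ) < 1/n` for every `n ≥ 1`. -/
theorem no_computable_small_nid_sequence (U : PrefixUMachine) :
    ¬ ∃ g : ℕ → List Bool × List Bool, Computable g ∧
      ∀ n : ℕ, 1 ≤ n → (g n).1.length = (g n).2.length ∧
        U.NID (g n).1 (g n).2 < 1 / (n : ℚ) := by
  rintro ⟨g, hg, hsmall⟩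
  have hpow : Computable fun k : ℕ => 2 ^ k :=
    ((Primrec₂.unpaired'.1 Nat.Primrec.pow).comp (Primrec.const 2) Primrec.id).to_comp
  obtain ⟨c₁, hc₁⟩ := U.exists_KC_le_add_of_computable (Computable.fst.comp (hg.comp hpow))
  obtain ⟨c₂, hc₂⟩ := U.exists_KC_le_add_of_computable (Computable.snd.comp (hg.comp hpow))
  set k := max c₁ c₂ + 1
  have hK₁ : U.K (g (2 ^ k)).1 ≤ k + c₁ := hc₁ k []
  have hK₂ : U.K (g (2 ^ k)).2 ≤ k + c₂ := hc₂ k []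
  have hlarge := U.lt_max_K_of_NID_lt (hsmall (2 ^ k) Nat.one_le_two_pow).2
  have hk : 2 * k ≤ 2 ^ k := by
    rw [pow_succ]
    have := Nat.lt_two_pow_self (n := max c₁ c₂)
    omega
  omega
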